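/- (Special case of Lemma 2.3 for Laguerre polynomials.) For every nonnegative integer n and all x, ₁F₁(-n; 1; x) = ₂F₃(-n/2, (1-n)/2; 1/2, 1/2, 1; x²/4) − n x · ₂F₃((1-n)/2, (2-n)/2; 3/2, 1, 3/2; x²/4), where all series terminate. Equivalently, Σ_{k=0}^{n} (-n)_k x^k/(k!)² = Σ_{m=0}^{⌊n/2⌋} (-n/2)_m ((1-n)/2)_m (x²/4)^m / ((1/2)_m (1/2)_m (1)_m m!) − n x Σ_{m=0}^{⌊(n-1)/2⌋} ((1-n)/2)_m ((2-n)/2)_m (x²/4)^m / ((3/2)_m (1)_m (3/2)_m m!). -/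

import Mathlib

/-!
Split the sum over `k` by the parity of `k`. The duplication formulas
`(a)_{2m} = 4^m (a/2)_m ((a+1)/2)_m`, `(2m)! = 4^m m! (1/2)_m` and `(2m+1)! = 4^m m! (3/2)_m`
turn the even terms into the terms of the first ₂F₃, and, after `(a)_{2m+1} = a (a+1)_{2m}`, the odd
terms into `a x` times the terms of the second ₂F₃; with `a = -n` this gives the factor `-n x`.
-/

open Finset

/-- Pochhammer (rising factorial) symbol on the reals. -/
noncomputable def poch (a : ℝ) (n : ℕ) : ℝ := ∏ i ∈ Finset.range n, (a + i)

lemma poch_succ (a : ℝ) (k : ℕ) : poch a (k + 1) = poch a k * (a + k) :=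
  prod_range_succ _ _

lemma poch_succ_eq_mul_poch_add_one (a : ℝ) (k : ℕ) : poch a (k + 1) = a * poch (a + 1) k := by
  rw [poch, prod_range_succ', Nat.cast_zero, add_zero, mul_comm, poch]
  congr 1
  refine prod_congr rfl fun i _ => ?_
  push_cast
  ring

lemma poch_one_eq_factorial (m : ℕ) : poch 1 m = m.factorial := by
  induction m with
  | zero => simp [poch]
  | succ m ih => rw [poch_succ, ih]; push_cast [Nat.factorial_succ]; ring

lemma poch_pos {a : ℝ} (ha : 0 < a) (m : ℕ) : 0 < poch a m :=
  prod_pos fun _ _ => by positivity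

lemma poch_two_mul (a : ℝ) (m : ℕ) :
    poch a (2 * m) = 4 ^ m * poch (a / 2) m * poch ((a + 1) / 2) m := by
  induction m with
  | zero => simp [poch]
  | succ m ih =>
    rw [Nat.mul_succ, poch_succ, poch_succ, ih, poch_succ, poch_succ]
    push_cast
    ring

lemma factorial_two_mul_eq (m : ℕ) :
    ((2 * m).factorial : ℝ) = 4 ^ m * m.factorial * poch (1 / 2) m := by
  induction m with
  | zero => simp [poch]
  | succ m ih =>
    rw [Nat.mul_succ, Nat.factorial_succ, Nat.factorial_succ, poch_succ]
    push_cast [ih, Nat.factorial_succ]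
    ring

lemma factorial_two_mul_add_one_eq (m : ℕ) :
    ((2 * m + 1).factorial : ℝ) = 4 ^ m * m.factorial * poch (3 / 2) m := by
  have h := (poch_succ (1 / 2) m).symm.trans (poch_succ_eq_mul_poch_add_one (1 / 2) m)
  rw [show (1 / 2 : ℝ) + 1 = 3 / 2 by norm_num] at h
  rw [Nat.factorial_succ, Nat.cast_mul, factorial_two_mul_eq]
  push_cast
  linear_combination 2 * 4 ^ m * (m.factorial : ℝ) * h

lemma Finset.sum_range_eq_sum_even_add_sum_odd {M : Type*} [AddCommMonoid M] (f : ℕ → M)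
    (N : ℕ) :
    ∑ k ∈ range N, f k =
      ∑ m ∈ range ((N + 1) / 2), f (2 * m) + ∑ m ∈ range (N / 2), f (2 * m + 1) := by
  induction N with
  | zero => simp
  | succ N ih =>
    rw [sum_range_succ, ih]
    rcases Nat.even_or_odd' N with ⟨t, rfl | rfl⟩
    · rw [show (2 * t + 1 + 1) / 2 = t + 1 by omega, show (2 * t + 1) / 2 = t by omega,
        show (2 * t) / 2 = t by omega, sum_range_succ]
      abel
    · rw [show (2 * t + 1 + 1 + 1) / 2 = t + 1 by omega, show (2 * t + 1 + 1) / 2 = t + 1 by omega,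
        show (2 * t + 1) / 2 = t by omega, sum_range_succ (fun m => f (2 * m + 1))]
      abel

lemma poch_mul_pow_div_factorial_sq_two_mul (a x : ℝ) (m : ℕ) :
    poch a (2 * m) * x ^ (2 * m) / ((2 * m).factorial : ℝ) ^ 2 =
      poch (a / 2) m * poch ((a + 1) / 2) m * (x ^ 2 / 4) ^ m /
        (poch (1 / 2) m * poch (1 / 2) m * poch 1 m * m.factorial) := by
  have hp : 0 < poch (1 / 2) m := poch_pos (by norm_num) m
  rw [poch_two_mul, factorial_two_mul_eq, poch_one_eq_factorial, pow_mul, div_pow]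
  field_simp

lemma poch_mul_pow_div_factorial_sq_two_mul_add_one (a x : ℝ) (m : ℕ) :
    poch a (2 * m + 1) * x ^ (2 * m + 1) / ((2 * m + 1).factorial : ℝ) ^ 2 =
      a * x * (poch ((a + 1) / 2) m * poch ((a + 2) / 2) m * (x ^ 2 / 4) ^ m /
        (poch (3 / 2) m * poch 1 m * poch (3 / 2) m * m.factorial)) := by
  have hp : 0 < poch (3 / 2) m := poch_pos (by norm_num) m
  rw [poch_succ_eq_mul_poch_add_one, poch_two_mul, factorial_two_mul_add_one_eq,
    poch_one_eq_factorial, pow_succ, pow_mul, div_pow, add_assoc, one_add_one_eq_two]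
  field_simp

/-- Even/odd splitting of ₁F₁(-n; 1; x): the Laguerre case of Lemma 2.3. -/
theorem oneFone_split (n : ℕ) (x : ℝ) :
    (∑ k ∈ Finset.range (n + 1), poch (-(n : ℝ)) k * x ^ k / ((k.factorial : ℝ)) ^ 2) =
      (∑ m ∈ Finset.range (n / 2 + 1),
        poch (-(n : ℝ) / 2) m * poch ((1 - (n : ℝ)) / 2) m * (x ^ 2 / 4) ^ m /
          (poch (1 / 2) m * poch (1 / 2) m * poch 1 m * (m.factorial : ℝ))) -
      (n : ℝ) * x *
      (∑ m ∈ Finset.range ((n - 1) / 2 + 1),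
        poch ((1 - (n : ℝ)) / 2) m * poch ((2 - (n : ℝ)) / 2) m * (x ^ 2 / 4) ^ m /
          (poch (3 / 2) m * poch 1 m * poch (3 / 2) m * (m.factorial : ℝ))) := by
  have h1 : (-(n : ℝ) + 1) / 2 = (1 - n) / 2 := by ring
  have h2 : (-(n : ℝ) + 2) / 2 = (2 - n) / 2 := by ring
  rw [sum_range_eq_sum_even_add_sum_odd, show (n + 1 + 1) / 2 = n / 2 + 1 by omega]
  simp only [poch_mul_pow_div_factorial_sq_two_mul, poch_mul_pow_div_factorial_sq_two_mul_add_one,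
    h1, h2, neg_mul, sum_neg_distrib, ← mul_sum, ← sub_eq_add_neg]
  rcases Nat.eq_zero_or_pos n with rfl | hn
  -- for `n = 0` the odd sum is empty on the left and killed by the factor `n` on the right
  · simp
  · rw [show (n + 1) / 2 = (n - 1) / 2 + 1 by omega]
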